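/- Let d ≥ 1, let G_1,…,G_d̄ be a partition of {1,…,d} into nonempty disjoint groups, let α ∈ ℝ^d̄ have strictly positive entries, and let p, q, s, t ∈ [1,∞] satisfy 1/p + 1/q = 1 and 1/s + 1/t = 1. Fix x, β ∈ ℝ^d, y ∈ {−1, 1}, and γ ≥ 0. Then sup_{u ∈ ℝ^d} { log(1 + exp(−y·βᵀu)) − γ‖x − u‖_{α⁻¹-(q,t)} } equals log(1 + exp(−y·βᵀx)) if ‖β‖_{α-(p,s)} ≤ γ, and equals +∞ if ‖β‖_{α-(p,s)} > γ. -/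

import Mathlib

open scoped ENNReal BigOperators
open MeasureTheory Filter

/-- The l_p norm (p ∈ [1,∞], with sup modification at p = ∞) of a finite real vector. -/
noncomputable def lpn (p : ℝ≥0∞) {ι : Type} [Fintype ι] (x : ι → ℝ) : ℝ :=
  ‖(WithLp.equiv p (ι → ℝ)).symm x‖

/-- The α-(p,s) groupwise norm: ‖x‖ = ( Σ_i α_i^s ‖x(G_i)‖_p^s )^{1/s}. -/
noncomputable def gnorm {d dbar : ℕ} (G : Fin dbar → Finset (Fin d)) (α : Fin dbar → ℝ)
    (p s : ℝ≥0∞) (x : Fin d → ℝ) : ℝ :=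
  lpn s (fun i => α i * lpn p (fun j : {k // k ∈ G i} => x j.1))

/-- G_1, …, G_d̄ form a partition of {1,…,d} into nonempty disjoint groups. -/
def IsPartition {d dbar : ℕ} (G : Fin dbar → Finset (Fin d)) : Prop :=
  (∀ i, (G i).Nonempty) ∧ (∀ i j, i ≠ j → Disjoint (G i) (G j)) ∧ (∀ k, ∃ i, k ∈ G i)


/-!
The logistic loss `ℓ z = log (1 + exp z)` is 1-Lipschitz and satisfies `z ≤ ℓ z`. Applying
Hölder's inequality inside each group and then across the groups gives
`|βᵀv| ≤ ‖β‖_{α-(p,s)} ‖v‖_{α⁻¹-(q,t)}`, so when `‖β‖_{α-(p,s)} ≤ γ` the penalty outweighs any gain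
of the loss and the supremum is attained at `u = x`. Conversely, the extremal vectors of the
`l_p`–`l_q` duality, taken in each group and weighted by an extremal vector of the `l_s`–`l_t`
duality, give `w` with `‖w‖_{α⁻¹-(q,t)} ≤ 1` and `βᵀw = ‖β‖_{α-(p,s)}`; if this exceeds `γ`, the
objective grows linearly along the ray `u = x - λ y w`.
-/

namespace ENNReal.HolderConjugate

lemma trichotomy (p q : ℝ≥0∞) [p.HolderConjugate q] :
    (p = 1 ∧ q = ∞) ∨ (p = ∞ ∧ q = 1) ∨
      (p ≠ ∞ ∧ q ≠ ∞ ∧ p.toReal.HolderConjugate q.toReal) := by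
  by_cases hp : p = ∞
  · exact Or.inr (Or.inl ⟨hp, (eq_top_iff_eq_one p q).1 hp⟩)
  by_cases hq : q = ∞
  · exact Or.inl ⟨(eq_top_iff_eq_one q p).1 hq, hq⟩
  exact Or.inr (Or.inr ⟨hp, hq, toReal_of_ne_top hp hq⟩)

end ENNReal.HolderConjugate

section lpn

variable {ι : Type} [Fintype ι] {p q : ℝ≥0∞}

lemma lpn_top_eq_ciSup (x : ι → ℝ) : lpn ∞ x = ⨆ i, |x i| := by
  simp [lpn, PiLp.norm_eq_ciSup, Real.norm_eq_abs]

lemma lpn_eq_sum (hp : p ≠ ∞) (hp0 : p ≠ 0) (x : ι → ℝ) :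
    lpn p x = (∑ i, |x i| ^ p.toReal) ^ (1 / p.toReal) := by
  simp [lpn, PiLp.norm_eq_sum (ENNReal.toReal_pos hp0 hp), Real.norm_eq_abs]

lemma lpn_one_eq_sum (x : ι → ℝ) : lpn 1 x = ∑ i, |x i| := by
  simp [lpn_eq_sum]

lemma abs_le_lpn (hp : 1 ≤ p) (x : ι → ℝ) (i : ι) : |x i| ≤ lpn p x :=
  have : Fact (1 ≤ p) := ⟨hp⟩
  PiLp.norm_apply_le ((WithLp.equiv p (ι → ℝ)).symm x) i

lemma lpn_nonneg (hp : 1 ≤ p) (x : ι → ℝ) : 0 ≤ lpn p x :=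
  have : Fact (1 ≤ p) := ⟨hp⟩
  norm_nonneg _

lemma lpn_smul (hp : 1 ≤ p) (c : ℝ) (x : ι → ℝ) : lpn p (c • x) = |c| * lpn p x := by
  have : Fact (1 ≤ p) := ⟨hp⟩
  rw [lpn, lpn, WithLp.equiv_symm_apply, WithLp.toLp_smul, norm_smul, Real.norm_eq_abs]

lemma lpn_mono (hp : 1 ≤ p) {x z : ι → ℝ} (h : ∀ i, |x i| ≤ |z i|) : lpn p x ≤ lpn p z := by
  rcases eq_or_ne p ∞ with rfl | hp'
  · rw [lpn_top_eq_ciSup, lpn_top_eq_ciSup]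
    exact ciSup_mono (Set.finite_range _).bddAbove h
  · have hp0 : 0 < p.toReal := ENNReal.toReal_pos (by positivity) hp'
    rw [lpn_eq_sum hp' (by positivity), lpn_eq_sum hp' (by positivity)]
    exact Real.rpow_le_rpow (by positivity)
      (Finset.sum_le_sum fun i _ => Real.rpow_le_rpow (abs_nonneg _) (h i) hp0.le) (by positivity)

lemma lpn_abs (hp : 1 ≤ p) (x : ι → ℝ) : lpn p (fun i => |x i|) = lpn p x :=
  le_antisymm (lpn_mono hp fun _ => (abs_abs _).le) (lpn_mono hp fun _ => (abs_abs _).ge)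

lemma sum_mul_le_lpn_one_mul_lpn_top (f g : ι → ℝ) : ∑ i, f i * g i ≤ lpn 1 f * lpn ∞ g := by
  rw [lpn_one_eq_sum, Finset.sum_mul]
  refine Finset.sum_le_sum fun i _ => ?_
  calc f i * g i ≤ |f i| * |g i| := by rw [← abs_mul]; exact le_abs_self _
    _ ≤ |f i| * lpn ∞ g := by gcongr; exact abs_le_lpn le_top g i

lemma sum_mul_le_lpn_mul_lpn [p.HolderConjugate q] (f g : ι → ℝ) :
    ∑ i, f i * g i ≤ lpn p f * lpn q g := by
  rcases ENNReal.HolderConjugate.trichotomy p q with ⟨rfl, rfl⟩ | ⟨rfl, rfl⟩ | ⟨hp, hq, hpq⟩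
  · exact sum_mul_le_lpn_one_mul_lpn_top f g
  · simpa only [mul_comm] using sum_mul_le_lpn_one_mul_lpn_top g f
  · rw [lpn_eq_sum hp (ENNReal.HolderConjugate.ne_zero p q),
      lpn_eq_sum hq (ENNReal.HolderConjugate.ne_zero q p)]
    exact Real.inner_le_Lp_mul_Lq Finset.univ f g hpq

lemma exists_lpn_dual_of_nonneg [p.HolderConjugate q] {b : ι → ℝ} (hb : 0 ≤ b) :
    ∃ u : ι → ℝ, 0 ≤ u ∧ lpn q u ≤ 1 ∧ ∑ i, b i * u i = lpn p b := by
  rcases ENNReal.HolderConjugate.trichotomy p q with ⟨rfl, rfl⟩ | ⟨rfl, rfl⟩ | ⟨hp, hq, hpq⟩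
  · refine ⟨1, zero_le_one, ?_, ?_⟩
    · rw [lpn_top_eq_ciSup]
      exact Real.iSup_le (fun i => by simp) zero_le_one
    · simp [lpn_one_eq_sum, abs_of_nonneg (hb _)]
  · rcases isEmpty_or_nonempty ι with hι | hι
    · exact ⟨0, le_rfl, by simp [lpn_one_eq_sum], by simp [lpn_top_eq_ciSup]⟩
    classical
    obtain ⟨i₀, hi₀⟩ := exists_eq_ciSup_of_finite (f := fun i => |b i|)
    refine ⟨Pi.single i₀ 1, ?_, ?_, ?_⟩
    · exact Pi.single_nonneg.2 zero_le_one
    · simp [lpn_one_eq_sum, Pi.single_apply, apply_ite]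
    · simp [lpn_top_eq_ciSup, ← hi₀, abs_of_nonneg (hb i₀), Pi.single_apply]
  · obtain ⟨⟨g, hg, hbg⟩, -⟩ :=
      NNReal.isGreatest_Lp Finset.univ (fun i => (b i).toNNReal) hpq
    refine ⟨fun i => g i, fun i => (g i).2, ?_, ?_⟩
    · rw [lpn_eq_sum hq (ENNReal.HolderConjugate.ne_zero q p)]
      have hg' : ∑ i, (g i : ℝ) ^ q.toReal ≤ 1 := by exact_mod_cast hg
      simpa using Real.rpow_le_one (by positivity) hg' (by positivity)
    · rw [lpn_eq_sum hp (ENNReal.HolderConjugate.ne_zero p q)]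
      have := congrArg NNReal.toReal hbg
      simp only [NNReal.coe_sum, NNReal.coe_mul, NNReal.coe_rpow, Real.coe_toNNReal _ (hb _)]
        at this
      simpa [abs_of_nonneg (hb _)] using this

lemma exists_lpn_dual [p.HolderConjugate q] (b : ι → ℝ) :
    ∃ u : ι → ℝ, lpn q u ≤ 1 ∧ ∑ i, b i * u i = lpn p b := by
  obtain ⟨v, -, hv1, hbv⟩ := exists_lpn_dual_of_nonneg (p := p) (q := q) (b := fun i => |b i|)
    fun i => abs_nonneg (b i)
  have hp := ENNReal.HolderConjugate.one_le p q
  have hq := ENNReal.HolderConjugate.one_le q p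
  refine ⟨fun i => if 0 ≤ b i then v i else -v i, ?_, ?_⟩
  · refine le_trans (lpn_mono hq fun i => ?_) hv1
    split_ifs <;> simp
  · rw [← lpn_abs hp, ← hbv]
    refine Finset.sum_congr rfl fun i _ => ?_
    dsimp only
    split_ifs with h
    · rw [abs_of_nonneg h]
    · rw [abs_of_neg (not_le.1 h), mul_neg, neg_mul]

end lpn

section gnorm

variable {d dbar : ℕ} (G : Fin dbar → Finset (Fin d)) {p q s t : ℝ≥0∞}

lemma gnorm_nonneg (α : Fin dbar → ℝ) (hs : 1 ≤ s) (x : Fin d → ℝ) : 0 ≤ gnorm G α p s x :=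
  lpn_nonneg hs _

lemma gnorm_smul (α : Fin dbar → ℝ) (hp : 1 ≤ p) (hs : 1 ≤ s) (c : ℝ) (x : Fin d → ℝ) :
    gnorm G α p s (c • x) = |c| * gnorm G α p s x := by
  have h : (fun i => α i * lpn p fun j : {k // k ∈ G i} => (c • x) j.1) =
      |c| • fun i => α i * lpn p fun j : {k // k ∈ G i} => x j.1 := by
    funext i
    rw [Pi.smul_apply, smul_eq_mul, mul_left_comm, ← lpn_smul hp]
    rfl
  rw [gnorm, h, lpn_smul hs, abs_abs, gnorm]

lemma gnorm_neg (α : Fin dbar → ℝ) (hp : 1 ≤ p) (hs : 1 ≤ s) (x : Fin d → ℝ) :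
    gnorm G α p s (-x) = gnorm G α p s x := by
  simpa using gnorm_smul G α hp hs (-1) x

def glueGroups (v : ∀ i, {k // k ∈ G i} → ℝ) : Fin d → ℝ :=
  fun k => ∑ i, if h : k ∈ G i then v i ⟨k, h⟩ else 0

variable {G}

lemma IsPartition.sum_eq_sum_sum (hG : IsPartition G) (f : Fin d → ℝ) :
    ∑ k, f k = ∑ i, ∑ j : {k // k ∈ G i}, f j := by
  classical
  obtain ⟨-, hdisj, hcover⟩ := hG
  have huniv : (Finset.univ : Finset (Fin d)) = Finset.univ.biUnion G := by
    ext k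
    simpa using hcover k
  rw [huniv, Finset.sum_biUnion fun i _ j _ hij => hdisj i j hij]
  exact Finset.sum_congr rfl fun i _ => (Finset.sum_coe_sort (G i) f).symm

lemma IsPartition.glueGroups_apply (hG : IsPartition G) (v : ∀ i, {k // k ∈ G i} → ℝ)
    (i : Fin dbar) (j : {k // k ∈ G i}) : glueGroups G v j = v i j := by
  rw [glueGroups, Finset.sum_eq_single i, dif_pos j.2]
  · exact fun i' _ hi' => dif_neg fun hj => Finset.disjoint_left.1 (hG.2.1 i' i hi') hj j.2
  · exact fun hi => absurd (Finset.mem_univ i) hi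

variable [p.HolderConjugate q] [s.HolderConjugate t]

lemma IsPartition.sum_mul_le_gnorm_mul_gnorm (hG : IsPartition G) {α : Fin dbar → ℝ}
    (hα : ∀ i, α i ≠ 0) (β v : Fin d → ℝ) :
    ∑ k, β k * v k ≤ gnorm G α p s β * gnorm G (fun i => (α i)⁻¹) q t v := by
  rw [hG.sum_eq_sum_sum]
  calc ∑ i, ∑ j : {k // k ∈ G i}, β j * v j
      ≤ ∑ i, (α i * lpn p fun j : {k // k ∈ G i} => β j) *
          ((α i)⁻¹ * lpn q fun j : {k // k ∈ G i} => v j) := by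
        gcongr with i
        rw [mul_mul_mul_comm, mul_inv_cancel₀ (hα i), one_mul]
        exact sum_mul_le_lpn_mul_lpn _ _
    _ ≤ _ := sum_mul_le_lpn_mul_lpn _ _

lemma IsPartition.abs_sum_mul_le_gnorm_mul_gnorm (hG : IsPartition G) {α : Fin dbar → ℝ}
    (hα : ∀ i, α i ≠ 0) (β v : Fin d → ℝ) :
    |∑ k, β k * v k| ≤ gnorm G α p s β * gnorm G (fun i => (α i)⁻¹) q t v := by
  have hneg := hG.sum_mul_le_gnorm_mul_gnorm (p := p) (q := q) (s := s) (t := t) hα β (-v)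
  rw [gnorm_neg G _ (ENNReal.HolderConjugate.one_le q p) (ENNReal.HolderConjugate.one_le t s)]
    at hneg
  simp only [Pi.neg_apply, mul_neg, Finset.sum_neg_distrib] at hneg
  exact abs_le.2 ⟨by linarith, hG.sum_mul_le_gnorm_mul_gnorm hα β v⟩

lemma IsPartition.exists_gnorm_dual (hG : IsPartition G) {α : Fin dbar → ℝ} (hα : ∀ i, 0 < α i)
    (β : Fin d → ℝ) :
    ∃ w, gnorm G (fun i => (α i)⁻¹) q t w ≤ 1 ∧ ∑ k, β k * w k = gnorm G α p s β := by
  have hp := ENNReal.HolderConjugate.one_le p q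
  have hq := ENNReal.HolderConjugate.one_le q p
  have ht := ENNReal.HolderConjugate.one_le t s
  obtain ⟨c, hc0, hc1, hac⟩ := exists_lpn_dual_of_nonneg (p := s) (q := t)
    (b := fun i => α i * lpn p fun j : {k // k ∈ G i} => β j)
    fun i => mul_nonneg (hα i).le (lpn_nonneg hp _)
  choose u hu1 hβu using fun i => exists_lpn_dual (p := p) (q := q)
    fun j : {k // k ∈ G i} => β j
  have hw : ∀ i, (fun j : {k // k ∈ G i} =>
      glueGroups G (fun i => (α i * c i) • u i) j) = (α i * c i) • u i :=
    fun i => funext (hG.glueGroups_apply _ i)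
  refine ⟨glueGroups G fun i => (α i * c i) • u i, ?_, ?_⟩
  · refine le_trans (lpn_mono ht fun i => ?_) hc1
    rw [hw, lpn_smul hq, abs_of_nonneg (mul_nonneg (hα i).le (hc0 i)), ← mul_assoc,
      ← mul_assoc, inv_mul_cancel₀ (hα i).ne', one_mul, abs_of_nonneg (hc0 i),
      abs_of_nonneg (mul_nonneg (hc0 i) (lpn_nonneg hq _))]
    exact mul_le_of_le_one_right (hc0 i) (hu1 i)
  · rw [hG.sum_eq_sum_sum, gnorm, ← hac]
    refine Finset.sum_congr rfl fun i _ => ?_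
    simp only [hG.glueGroups_apply _ i, Pi.smul_apply, smul_eq_mul, mul_left_comm _ (α i * c i),
      ← Finset.mul_sum, hβu]
    ring

end gnorm

lemma Real.le_log_one_add_exp (z : ℝ) : z ≤ Real.log (1 + Real.exp z) := by
  calc z = Real.log (Real.exp z) := (Real.log_exp z).symm
    _ ≤ Real.log (1 + Real.exp z) := Real.log_le_log (Real.exp_pos z) (by linarith)

lemma Real.log_one_add_exp_le (a c : ℝ) :
    Real.log (1 + Real.exp a) ≤ Real.log (1 + Real.exp c) + |a - c| := by
  have h : 1 + Real.exp a ≤ Real.exp |a - c| * (1 + Real.exp c) := by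
    rw [mul_add, mul_one, ← Real.exp_add]
    have h1 : 1 ≤ Real.exp |a - c| := Real.one_le_exp (abs_nonneg _)
    have h2 : Real.exp a ≤ Real.exp (|a - c| + c) :=
      Real.exp_le_exp.2 (by linarith [le_abs_self (a - c)])
    linarith
  calc Real.log (1 + Real.exp a) ≤ Real.log (Real.exp |a - c| * (1 + Real.exp c)) :=
        Real.log_le_log (by positivity) h
    _ = Real.log (1 + Real.exp c) + |a - c| := by
        rw [Real.log_mul (by positivity) (by positivity), Real.log_exp, add_comm]

section logistic

variable {E : Type*} [AddCommGroup E] [Module ℝ E] (f : E →ₗ[ℝ] ℝ) (D : E → ℝ) (γ : ℝ) (x : E)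

lemma iSup_ofReal_log_one_add_exp_sub_eq (hD : D 0 = 0) (hf : ∀ v, |f v| ≤ γ * D v) :
    ⨆ u, ENNReal.ofReal (Real.log (1 + Real.exp (f u)) - γ * D (x - u)) =
      ENNReal.ofReal (Real.log (1 + Real.exp (f x))) := by
  refine le_antisymm (iSup_le fun u => ENNReal.ofReal_le_ofReal ?_) ?_
  · have h := Real.log_one_add_exp_le (f u) (f x)
    have hux : |f u - f x| = |f (x - u)| := by rw [map_sub, abs_sub_comm]
    linarith [hf (x - u)]
  · exact le_iSup_of_le x (by rw [sub_self, hD, mul_zero, sub_zero])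

lemma iSup_ofReal_log_one_add_exp_sub_eq_top (hD : ∀ (c : ℝ) v, D (c • v) = |c| * D v)
    {w : E} (hw : γ * D w < f w) :
    ⨆ u, ENNReal.ofReal (Real.log (1 + Real.exp (f u)) - γ * D (x - u)) = ⊤ := by
  refine ENNReal.eq_top_of_forall_nnreal_le fun r => ?_
  set δ := f w - γ * D w
  have hδ : 0 < δ := sub_pos.2 hw
  set l := |r - f x| / δ
  have hl : 0 ≤ l := by positivity
  refine le_iSup_of_le (x + l • w) ?_
  rw [← ENNReal.ofReal_coe_nnreal]
  refine ENNReal.ofReal_le_ofReal ?_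
  have hxu : x - (x + l • w) = (-l) • w := by rw [neg_smul, sub_add_cancel_left]
  have hlδ : l * δ = |r - f x| := div_mul_cancel₀ _ hδ.ne'
  calc (r : ℝ) ≤ f x + l * δ := by rw [hlδ]; linarith [le_abs_self ((r : ℝ) - f x)]
    _ = f (x + l • w) - γ * D (x - (x + l • w)) := by
        rw [hxu, hD, abs_neg, abs_of_nonneg hl, map_add, map_smul, smul_eq_mul]
        ring
    _ ≤ _ := by gcongr; exact Real.le_log_one_add_exp _

end logistic

theorem statement11_general {d dbar : ℕ}
    (G : Fin dbar → Finset (Fin d)) (hG : IsPartition G)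
    (α : Fin dbar → ℝ) (hα : ∀ i, 0 < α i)
    (p q s t : ℝ≥0∞)
    (hpq : 1 / p + 1 / q = 1) (hst : 1 / s + 1 / t = 1)
    (x β : Fin d → ℝ) (y : ℝ) (hy : y = 1 ∨ y = -1) (γ : ℝ) (hγ : 0 ≤ γ) :
    (gnorm G α p s β ≤ γ →
      (⨆ u : Fin d → ℝ, ENNReal.ofReal
          (Real.log (1 + Real.exp (- y * ∑ k, β k * u k)) -
            γ * gnorm G (fun i => (α i)⁻¹) q t (x - u)))
        = ENNReal.ofReal (Real.log (1 + Real.exp (- y * ∑ k, β k * x k)))) ∧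
    (γ < gnorm G α p s β →
      (⨆ u : Fin d → ℝ, ENNReal.ofReal
          (Real.log (1 + Real.exp (- y * ∑ k, β k * u k)) -
            γ * gnorm G (fun i => (α i)⁻¹) q t (x - u)))
        = ⊤) := by
  have : p.HolderConjugate q := ENNReal.holderConjugate_iff.2 (by simpa only [one_div] using hpq)
  have : s.HolderConjugate t := ENNReal.holderConjugate_iff.2 (by simpa only [one_div] using hst)
  have hy_abs : |y| = 1 := by rcases hy with rfl | rfl <;> norm_num
  set D := gnorm G (fun i => (α i)⁻¹) q t
  have hD : ∀ (c : ℝ) v, D (c • v) = |c| * D v := gnorm_smul G _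
    (ENNReal.HolderConjugate.one_le q p) (ENNReal.HolderConjugate.one_le t s)
  set f := (-y) • dotProductBilin ℝ ℝ β
  have hf : ∀ u, f u = -y * ∑ k, β k * u k := fun u => rfl
  simp only [← hf]
  refine ⟨fun hβ => ?_, fun hβ => ?_⟩
  · refine iSup_ofReal_log_one_add_exp_sub_eq f D γ x (by simpa using hD 0 0) fun v => ?_
    calc |f v| = |∑ k, β k * v k| := by rw [hf, abs_mul, abs_neg, hy_abs, one_mul]
      _ ≤ gnorm G α p s β * D v := hG.abs_sum_mul_le_gnorm_mul_gnorm (fun i => (hα i).ne') β v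
      _ ≤ γ * D v := by gcongr; exact gnorm_nonneg G _ (ENNReal.HolderConjugate.one_le t s) v
  · obtain ⟨w, hw, hβw⟩ := hG.exists_gnorm_dual (p := p) (q := q) (s := s) (t := t) hα β
    refine iSup_ofReal_log_one_add_exp_sub_eq_top f D γ x hD (w := (-y) • w) ?_
    calc γ * D ((-y) • w) ≤ γ := by
          rw [hD, abs_neg, hy_abs, one_mul]
          exact mul_le_of_le_one_right hγ hw
      _ < gnorm G α p s β := hβ
      _ = f ((-y) • w) := by
          rw [map_smul, hf, smul_eq_mul, hβw]
          rcases hy with rfl | rfl <;> ring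

theorem statement11 {d dbar : ℕ} (hd : 1 ≤ d)
    (G : Fin dbar → Finset (Fin d)) (hG : IsPartition G)
    (α : Fin dbar → ℝ) (hα : ∀ i, 0 < α i)
    (p q s t : ℝ≥0∞) (hp : 1 ≤ p) (hq : 1 ≤ q) (hs : 1 ≤ s) (ht : 1 ≤ t)
    (hpq : 1 / p + 1 / q = 1) (hst : 1 / s + 1 / t = 1)
    (x β : Fin d → ℝ) (y : ℝ) (hy : y = 1 ∨ y = -1) (γ : ℝ) (hγ : 0 ≤ γ) :
    (gnorm G α p s β ≤ γ →
      (⨆ u : Fin d → ℝ, ENNReal.ofReal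
          (Real.log (1 + Real.exp (- y * ∑ k, β k * u k)) -
            γ * gnorm G (fun i => (α i)⁻¹) q t (x - u)))
        = ENNReal.ofReal (Real.log (1 + Real.exp (- y * ∑ k, β k * x k)))) ∧
    (γ < gnorm G α p s β →
      (⨆ u : Fin d → ℝ, ENNReal.ofReal
          (Real.log (1 + Real.exp (- y * ∑ k, β k * u k)) -
            γ * gnorm G (fun i => (α i)⁻¹) q t (x - u)))
        = ⊤) :=
  statement11_general G hG α hα p q s t hpq hst x β y hy γ hγ
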